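/- For every integer k ≥ 1, Ulam[2^{k+1}−2] is exactly the set of pairs (x,z) ∈ ℕ×ℕ satisfying at least one of the following: (i) x+z ≡ −1 (mod 2^{k+1}) and x+z ≠ 2^{k+1}−1; (ii) x+z = 2^{k+1}−2 and both x and z are even; (iii) x+z = 2^{k+1} and x > 0 and z > 0. -/

import Mathlib

/-- Fuel-indexed Ulam predicate: a binary word (as a `List Bool`) of length 1 is Ulam,
and a longer word is Ulam iff it is expressible *uniquely* as a concatenation of two
distinct (nonempty) Ulam words. The fuel strictly exceeds the lengths needed. -/
def ulamAux : ℕ → List Bool → Prop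
  | 0, _ => False
  | n + 1, w =>
    if w.length = 1 then True
    else ∃! p : List Bool × List Bool,
      p.1 ≠ [] ∧ p.2 ≠ [] ∧ p.1 ≠ p.2 ∧ w = p.1 ++ p.2 ∧
        ulamAux n p.1 ∧ ulamAux n p.2

/-- A binary word is an Ulam word. -/
def IsUlam (w : List Bool) : Prop := ulamAux w.length w

/-- The word `0^x 1 0^y`. -/
def wordTwo (x y : ℕ) : List Bool :=
  List.replicate x false ++ [true] ++ List.replicate y false

/-- The word `0^x 1 0^y 1 0^z`. -/
def wordThree (x y z : ℕ) : List Bool :=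
  List.replicate x false ++ [true] ++ List.replicate y false ++ [true] ++
    List.replicate z false

/-- `UlamSet y` is the set of pairs `(x,z)` such that `0^x 1 0^y 1 0^z` is Ulam. -/
def UlamSet (y : ℕ) : Set (ℕ × ℕ) := {p | IsUlam (wordThree p.1 y p.2)}

/-- `culam y x z = min(2, N)` where `N` counts `0 ≤ a ≤ y` with both
`w(x,a)` and `w(y-a,z)` Ulam. -/
noncomputable def culam (y x z : ℕ) : ℕ :=
  min 2 {a : ℕ | a ≤ y ∧ IsUlam (wordTwo x a) ∧ IsUlam (wordTwo (y - a) z)}.ncard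

/-- A positive integer is Zumkeller if its binary representation has at most one `0`. -/
def IsZumkeller (y : ℕ) : Prop := 0 < y ∧ (Nat.bits y).count false ≤ 1

/-- The largest `e ≤ d - 1` with `x mod 2^(e+1) < 2^e` and `z mod 2^(e+1) < 2^e`
(and `0` if none exists). -/
def eIdx (d x z : ℕ) : ℕ :=
  Nat.findGreatest (fun e => x % 2 ^ (e + 1) < 2 ^ e ∧ z % 2 ^ (e + 1) < 2 ^ e) (d - 1)

/-- The universal pattern `E1[d]` on `B_d`. -/
def E1 (d x z : ℕ) : ℕ :=
  if 2 ^ d - 1 ≤ x + z then 0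
  else if x % 2 ^ eIdx d x z + z % 2 ^ eIdx d x z < 2 ^ eIdx d x z - 1 then 2 else 1

/-- The universal pattern `E2[d]` on `B_d` (constant `1`). -/
def E2 (_d _x _z : ℕ) : ℕ := 1

/-- The universal pattern `O1[d]` on `B_d`. -/
def O1 (d x z : ℕ) : ℕ :=
  if 2 ^ d - 2 ≤ x + z then 0
  else if (x + z) % 2 = 0 then (if x % 2 = 1 then 0 else 2)
  else if x % 2 ^ eIdx d x z + z % 2 ^ eIdx d x z < 2 ^ eIdx d x z - 1 then 2 else 1

/-- The universal pattern `O2[d]` on `B_d` (independent of `d`). -/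
def O2 (_d x z : ℕ) : ℕ :=
  if (x + z) % 2 = 0 then (if x % 2 = 1 then 0 else 2) else 1

section UlamProof

lemma land_zero_iff (x z : ℕ) : x &&& z = 0 ↔ ∀ i, ¬(x.testBit i = true ∧ z.testBit i = true) := by
  constructor
  · intro h i ⟨hx, hz⟩
    have := congrArg (fun n => Nat.testBit n i) h
    simp [Nat.testBit_and, hx, hz] at this
  · intro h
    refine Nat.eq_of_testBit_eq (fun i => ?_)
    simp only [Nat.testBit_and, Nat.zero_testBit]
    have := h i
    rcases Bool.eq_false_or_eq_true (x.testBit i) with h1 | h1 <;>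
      rcases Bool.eq_false_or_eq_true (z.testBit i) with h2 | h2 <;> simp_all

lemma land_master (x z : ℕ) : x &&& z = 0 ↔ (x % 2 = 0 ∨ z % 2 = 0) ∧ (x/2) &&& (z/2) = 0 := by
  rw [land_zero_iff, land_zero_iff]
  constructor
  · intro h
    refine ⟨?_, fun i hi => h (i+1) (by simpa [Nat.testBit_succ] using hi)⟩
    by_contra hc
    push_neg at hc
    exact h 0 (by simp [Nat.testBit_zero]; omega)
  · rintro ⟨h0, h⟩ i ⟨hx, hz⟩
    cases i with
    | zero => simp [Nat.testBit_zero] at hx hz; omega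
    | succ j => exact h j (by simp [← Nat.testBit_succ]; exact ⟨hx, hz⟩)

lemma land_two_mul (t x : ℕ) : (2*t) &&& x = 0 ↔ t &&& (x/2) = 0 := by
  rw [land_master]
  simp [Nat.mul_div_cancel_left t (by norm_num : (0:ℕ) < 2), Nat.mul_mod_right]

lemma land_two_mul_add_one (t x : ℕ) : (2*t+1) &&& x = 0 ↔ x % 2 = 0 ∧ t &&& (x/2) = 0 := by
  rw [land_master]
  have h1 : (2*t+1) % 2 = 1 := by omega
  have h2 : (2*t+1) / 2 = t := by omega
  rw [h1, h2]
  constructor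
  · rintro ⟨h | h, h'⟩ <;> simp_all
  · rintro ⟨h, h'⟩; exact ⟨Or.inr h, h'⟩

lemma land_odd_odd (x z : ℕ) (hx : x % 2 = 1) (hz : z % 2 = 1) : x &&& z ≠ 0 := by
  intro h; rw [land_master] at h; rcases h with ⟨h, -⟩; omega

lemma land_of_add_eq_pow_sub_one (t : ℕ) : ∀ x z : ℕ, x + z = 2^t - 1 → x &&& z = 0 := by
  induction t with
  | zero =>
    intro x z h
    have hx : x = 0 := by omega
    have hz : z = 0 := by omega
    simp [hx, hz]
  | succ t ih =>
    intro x z h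
    have h2 : (2:ℕ) ≤ 2^(t+1) := by
      have : (2:ℕ)^1 ≤ 2^(t+1) := Nat.pow_le_pow_right (by norm_num) (by omega)
      simpa using this
    rw [land_master]
    have hp : x % 2 = 0 ∨ z % 2 = 0 := by
      have : x % 2 + z % 2 ≠ 2 ∨ True := by tauto
      by_contra hc; push_neg at hc
      have hx := hc.1; have hz := hc.2
      have : (x + z) % 2 = 0 := by omega
      have h21 : (2^(t+1) - 1) % 2 = 1 := by
        have : 2^(t+1) % 2 = 0 := by
          have : (2:ℕ) ∣ 2^(t+1) := dvd_pow_self 2 (by omega)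
          omega
        omega
      omega
    refine ⟨hp, ih (x/2) (z/2) ?_⟩
    have hpow : 2^(t+1) = 2 * 2^t := by ring
    omega

lemma mod_two_pow_succ (x m : ℕ) : x % 2^(m+1) = x % 2 + 2 * (x/2 % 2^m) := by
  have h1 : x = 2 * (x/2) + x % 2 := by omega
  have h2 : x / 2 = 2^m * (x/2/2^m) + x/2 % 2^m := by
    have := Nat.div_add_mod (x/2) (2^m); omega
  have hpow : 2^(m+1) = 2 * 2^m := by ring
  calc x % 2^(m+1) = (x % 2 + 2 * (x/2 % 2^m) + (2^(m+1)) * (x/2/2^m)) % 2^(m+1) := by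
        congr 1
        have he : 2^(m+1) * (x/2/2^m) = 2*(2^m * (x/2/2^m)) := by rw [hpow]; ring
        omega
    _ = (x % 2 + 2 * (x/2 % 2^m)) % 2^(m+1) := by rw [Nat.add_mul_mod_self_left]
    _ = x % 2 + 2 * (x/2 % 2^m) := by
        apply Nat.mod_eq_of_lt
        have hx2 : x % 2 < 2 := Nat.mod_lt _ (by norm_num)
        have : x/2 % 2^m < 2^m := Nat.mod_lt _ (Nat.pow_pos (by norm_num))
        omega

open Finset

lemma filter_range_card_succ (p : ℕ → Prop) [DecidablePred p] (n : ℕ) :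
    ((range (n+1)).filter p).card = ((range n).filter p).card + if p n then 1 else 0 := by
  rw [Finset.range_add_one, Finset.filter_insert]
  by_cases h : p n
  · rw [if_pos h, if_pos h, Finset.card_insert_of_notMem (by simp)]
  · rw [if_neg h, if_neg h]
    omega

lemma filter_range_even_odd (p : ℕ → Prop) [DecidablePred p] (N : ℕ) :
    ((range (2*N)).filter p).card =
      ((range N).filter (fun t => p (2*t))).card +
      ((range N).filter (fun t => p (2*t+1))).card := by
  induction N with
  | zero => simp
  | succ N ih =>
    have h1 : 2*(N+1) = (2*N+1)+1 := by ring
    rw [h1, filter_range_card_succ, filter_range_card_succ,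
      filter_range_card_succ (fun t => p (2*t)), filter_range_card_succ (fun t => p (2*t+1))]
    simp only [ih]
    have h2 : 2*N+1 = 2*N+1 := rfl
    omega

lemma filter_range_odd_len (p : ℕ → Prop) [DecidablePred p] (N : ℕ) :
    ((range (2*N+1)).filter p).card =
      ((range (N+1)).filter (fun t => p (2*t))).card +
      ((range N).filter (fun t => p (2*t+1))).card := by
  rw [filter_range_card_succ, filter_range_even_odd,
    filter_range_card_succ (fun t => p (2*t))]
  omega

/-- count for `y = 2^m - 1`, over `a ∈ [0, 2^m - 1]`. -/
def cntOne (m x z : ℕ) : ℕ :=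
  ((range (2^m)).filter (fun a => a &&& x = 0 ∧ (2^m - 1 - a) &&& z = 0)).card

/-- count for `y = 2^m - 2`, over `a ∈ [0, 2^m - 2]`. -/
def cnt (m x z : ℕ) : ℕ :=
  ((range (2^m - 1)).filter (fun a => a &&& x = 0 ∧ (2^m - 2 - a) &&& z = 0)).card

lemma cntOne_zero (x z : ℕ) : cntOne 0 x z = 1 := by
  simp [cntOne, Finset.filter_singleton, Nat.zero_and]

lemma cnt_zero (x z : ℕ) : cnt 0 x z = 0 := by
  simp [cnt]

lemma two_pow_succ' (m : ℕ) : 2^(m+1) = 2*2^m := by ring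

lemma cntOne_succ (m x z : ℕ) : cntOne (m+1) x z =
    (if z % 2 = 0 then cntOne m (x/2) (z/2) else 0) +
    (if x % 2 = 0 then cntOne m (x/2) (z/2) else 0) := by
  have hM : 1 ≤ 2^m := Nat.one_le_two_pow
  unfold cntOne
  rw [two_pow_succ', filter_range_even_odd]
  congr 1
  · -- even part
    by_cases hz : z % 2 = 0
    · simp only [hz, if_true]
      congr 1
      apply Finset.filter_congr
      intro t ht
      simp only [Finset.mem_range] at ht
      have h1 : 2*2^m - 1 - 2*t = 2*(2^m - 1 - t)+1 := by omega
      rw [h1, land_two_mul, land_two_mul_add_one]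
      simp [hz]
    · simp only [hz, if_false]
      rw [Finset.card_eq_zero, Finset.filter_eq_empty_iff]
      intro t ht
      simp only [Finset.mem_range] at ht
      have h1 : 2*2^m - 1 - 2*t = 2*(2^m - 1 - t)+1 := by omega
      rw [h1, land_two_mul_add_one]
      tauto
  · -- odd part
    by_cases hx : x % 2 = 0
    · simp only [hx, if_true]
      congr 1
      apply Finset.filter_congr
      intro t ht
      simp only [Finset.mem_range] at ht
      have h1 : 2*2^m - 1 - (2*t+1) = 2*(2^m - 1 - t) := by omega
      rw [h1, land_two_mul, land_two_mul_add_one]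
      simp [hx]
    · simp only [hx, if_false]
      rw [Finset.card_eq_zero, Finset.filter_eq_empty_iff]
      intro t ht
      rw [land_two_mul_add_one]
      tauto

lemma cnt_succ (m x z : ℕ) : cnt (m+1) x z =
    cntOne m (x/2) (z/2) +
    (if x % 2 = 0 ∧ z % 2 = 0 then cnt m (x/2) (z/2) else 0) := by
  have hM : 1 ≤ 2^m := Nat.one_le_two_pow
  unfold cnt cntOne
  have h0 : 2^(m+1) - 1 = 2*(2^m - 1)+1 := by rw [two_pow_succ']; omega
  rw [h0, filter_range_odd_len]
  congr 1
  · -- even part: a = 2t, t ∈ range (2^m - 1 + 1) = range (2^m)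
    have h1 : 2^m - 1 + 1 = 2^m := by omega
    rw [h1]
    congr 1
    apply Finset.filter_congr
    intro t ht
    simp only [Finset.mem_range] at ht
    have h2 : 2^(m+1) - 2 - 2*t = 2*(2^m - 1 - t) := by rw [two_pow_succ']; omega
    rw [h2, land_two_mul, land_two_mul]
  · -- odd part
    by_cases hxz : x % 2 = 0 ∧ z % 2 = 0
    · simp only [hxz, if_true]
      congr 1
      apply Finset.filter_congr
      intro t ht
      simp only [Finset.mem_range] at ht
      have h2 : 2^(m+1) - 2 - (2*t+1) = 2*(2^m - 2 - t)+1 := by rw [two_pow_succ']; omega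
      rw [h2, land_two_mul_add_one, land_two_mul_add_one]
      have := hxz.1; have := hxz.2
      tauto
    · simp only [hxz, if_false]
      rw [Finset.card_eq_zero, Finset.filter_eq_empty_iff]
      intro t ht
      simp only [Finset.mem_range] at ht
      have h2 : 2^(m+1) - 2 - (2*t+1) = 2*(2^m - 2 - t)+1 := by rw [two_pow_succ']; omega
      rw [h2, land_two_mul_add_one, land_two_mul_add_one]
      tauto

lemma cntOne_eq_one_iff : ∀ m x z, cntOne m x z = 1 ↔ x % 2^m + z % 2^m = 2^m - 1 := by
  intro m
  induction m with
  | zero => intro x z; simp [cntOne_zero, Nat.mod_one]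
  | succ m ih =>
    intro x z
    have hM : 1 ≤ 2^m := Nat.one_le_two_pow
    have h2 : 2^(m+1) = 2*2^m := two_pow_succ' m
    have hx := mod_two_pow_succ x m
    have hz := mod_two_pow_succ z m
    have hxm : x/2 % 2^m < 2^m := Nat.mod_lt _ (by omega)
    have hzm : z/2 % 2^m < 2^m := Nat.mod_lt _ (by omega)
    rw [cntOne_succ]
    rcases Nat.mod_two_eq_zero_or_one x with hx2 | hx2 <;>
      rcases Nat.mod_two_eq_zero_or_one z with hz2 | hz2
    · rw [if_pos hz2, if_pos hx2]
      constructor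
      · intro h; exfalso; omega
      · intro h; exfalso; omega
    · rw [if_neg (by omega), if_pos hx2, Nat.zero_add, ih]
      omega
    · rw [if_pos hz2, if_neg (by omega), Nat.add_zero, ih]
      omega
    · rw [if_neg (by omega), if_neg (by omega)]
      constructor
      · intro h; exfalso; omega
      · intro h; exfalso; omega

lemma cntOne_even_of_ne_one : ∀ m x z, cntOne m x z ≠ 1 → cntOne m x z % 2 = 0 := by
  intro m
  induction m with
  | zero => intro x z h; exact absurd (cntOne_zero x z) h
  | succ m ih =>
    intro x z h
    rw [cntOne_succ] at h ⊢
    rcases Nat.mod_two_eq_zero_or_one x with hx2 | hx2 <;>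
      rcases Nat.mod_two_eq_zero_or_one z with hz2 | hz2
    · rw [if_pos hz2, if_pos hx2] at h ⊢; omega
    · rw [if_neg (by omega), if_pos hx2] at h ⊢
      have := ih (x/2) (z/2) (by omega)
      omega
    · rw [if_pos hz2, if_neg (by omega)] at h ⊢
      have := ih (x/2) (z/2) (by omega)
      omega
    · rw [if_neg (by omega), if_neg (by omega)]

lemma cntOne_eq_zero_of_ge : ∀ m x z, 2^m ≤ x % 2^m + z % 2^m → cntOne m x z = 0 := by
  intro m
  induction m with
  | zero => intro x z h; simp [Nat.mod_one] at h
  | succ m ih =>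
    intro x z h
    have hM : 1 ≤ 2^m := Nat.one_le_two_pow
    have h2 : 2^(m+1) = 2*2^m := two_pow_succ' m
    have hx := mod_two_pow_succ x m
    have hz := mod_two_pow_succ z m
    rw [cntOne_succ]
    rcases Nat.mod_two_eq_zero_or_one x with hx2 | hx2 <;>
      rcases Nat.mod_two_eq_zero_or_one z with hz2 | hz2
    · have e := ih (x/2) (z/2) (by omega)
      rw [if_pos hz2, if_pos hx2, e]
    · have e := ih (x/2) (z/2) (by omega)
      rw [if_neg (by omega), if_pos hx2, e]
    · have e := ih (x/2) (z/2) (by omega)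
      rw [if_pos hz2, if_neg (by omega), e]
    · rw [if_neg (by omega), if_neg (by omega)]

lemma add_mod_of_lt (X Z N : ℕ) (hX : X < N) (hZ : Z < N) :
    (X+Z) % N = X+Z ∨ (X+Z) % N + N = X+Z := by
  rcases lt_or_ge (X+Z) N with h | h
  · left; exact Nat.mod_eq_of_lt h
  · right
    rw [Nat.mod_eq_sub_mod h, Nat.mod_eq_of_lt (by omega)]
    omega

/-- Key: `(x+z) % 2^m` in terms of `x % 2^m + z % 2^m`. -/
lemma add_mod_pow (x z N : ℕ) (hN : 0 < N) :
    ((x+z) % N = x % N + z % N ∧ x % N + z % N < N) ∨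
    ((x+z) % N + N = x % N + z % N) := by
  have h1 : (x+z) % N = (x % N + z % N) % N := by rw [Nat.add_mod]
  have hX : x % N < N := Nat.mod_lt _ hN
  have hZ : z % N < N := Nat.mod_lt _ hN
  rcases add_mod_of_lt (x % N) (z % N) N hX hZ with h | h
  · left; constructor
    · omega
    · rcases lt_or_ge (x % N + z % N) N with h' | h'
      · exact h'
      · exfalso
        have := Nat.mod_lt (x % N + z % N) hN
        omega
  · right; omega

lemma cnt_G1 : ∀ m x z, 1 ≤ m → (x+z) % 2^m = 2^m - 1 → cnt m x z = 1 := by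
  rintro ⟨⟩ x z hm h
  · omega
  case succ m =>
    have hM : 1 ≤ 2^m := Nat.one_le_two_pow
    have h2 : 2^(m+1) = 2*2^m := two_pow_succ' m
    have hx := mod_two_pow_succ x m
    have hz := mod_two_pow_succ z m
    have hadd := add_mod_pow x z (2^(m+1)) (by omega)
    -- x+z odd: parities differ
    have hkey : x % 2^(m+1) + z % 2^(m+1) = 2^(m+1) - 1 := by omega
    have hpar : x % 2 + z % 2 = 1 := by omega
    rw [cnt_succ, if_neg (by omega)]
    have : cntOne m (x/2) (z/2) = 1 := by
      rw [cntOne_eq_one_iff]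
      omega
    omega

lemma cnt_G2 : ∀ m x z, (x+z) % 2^m ≠ 0 → (x+z) % 2^m ≠ 2^m - 1 → cnt m x z % 2 = 0 := by
  intro m
  induction m with
  | zero => intro x z h1 h2; simp only [pow_zero, Nat.mod_one] at h1; omega
  | succ m ih =>
    intro x z h1 h2
    have hM : 1 ≤ 2^m := Nat.one_le_two_pow
    have h2' : 2^(m+1) = 2*2^m := two_pow_succ' m
    have hx := mod_two_pow_succ x m
    have hz := mod_two_pow_succ z m
    have hadd := add_mod_pow x z (2^(m+1)) (by omega)
    rw [cnt_succ]
    rcases Nat.mod_two_eq_zero_or_one x with hx2 | hx2 <;>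
      rcases Nat.mod_two_eq_zero_or_one z with hz2 | hz2
    · -- both even
      rw [if_pos ⟨hx2, hz2⟩]
      have hs' := add_mod_pow (x/2) (z/2) (2^m) (by omega)
      by_cases hc : x/2 % 2^m + z/2 % 2^m = 2^m - 1
      · have e1 : cntOne m (x/2) (z/2) = 1 := by rw [cntOne_eq_one_iff]; exact hc
        have e2 : cnt m (x/2) (z/2) = 1 := by
          rcases Nat.eq_zero_or_pos m with rfl | hm
          · simp at hc; omega
          · exact cnt_G1 m (x/2) (z/2) hm (by omega)
        omega
      · have e1 : cntOne m (x/2) (z/2) % 2 = 0 := by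
          apply cntOne_even_of_ne_one
          intro hone
          rw [cntOne_eq_one_iff] at hone
          exact hc hone
        have e2 : cnt m (x/2) (z/2) % 2 = 0 := by
          apply ih
          · omega
          · omega
        omega
    · rw [if_neg (by omega)]
      have : cntOne m (x/2) (z/2) % 2 = 0 := by
        apply cntOne_even_of_ne_one
        intro hone
        rw [cntOne_eq_one_iff] at hone
        omega
      omega
    · rw [if_neg (by omega)]
      have : cntOne m (x/2) (z/2) % 2 = 0 := by
        apply cntOne_even_of_ne_one
        intro hone
        rw [cntOne_eq_one_iff] at hone
        omega
      omega
    · rw [if_neg (by omega)]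
      have : cntOne m (x/2) (z/2) % 2 = 0 := by
        apply cntOne_even_of_ne_one
        intro hone
        rw [cntOne_eq_one_iff] at hone
        omega
      omega

lemma cnt_G3 : ∀ m x z, x + z = 2^m → 0 < x → 0 < z → cnt m x z = 1 := by
  intro m
  induction m with
  | zero => intro x z h hx hz; omega
  | succ m ih =>
    intro x z h hx hz
    have hM : 1 ≤ 2^m := Nat.one_le_two_pow
    have h2 : 2^(m+1) = 2*2^m := two_pow_succ' m
    rw [cnt_succ]
    rcases Nat.mod_two_eq_zero_or_one x with hx2 | hx2 <;>
      rcases Nat.mod_two_eq_zero_or_one z with hz2 | hz2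
    · -- both even
      rw [if_pos ⟨hx2, hz2⟩]
      have hx1 : 0 < x/2 := by omega
      have hz1 : 0 < z/2 := by omega
      have hsum : x/2 + z/2 = 2^m := by omega
      have e2 : cnt m (x/2) (z/2) = 1 := ih _ _ hsum hx1 hz1
      have e1 : cntOne m (x/2) (z/2) = 0 := by
        apply cntOne_eq_zero_of_ge
        rw [Nat.mod_eq_of_lt (by omega), Nat.mod_eq_of_lt (by omega)]
        omega
      omega
    · omega
    · omega
    · -- both odd
      rw [if_neg (by omega)]
      have e1 : cntOne m (x/2) (z/2) = 1 := by
        rw [cntOne_eq_one_iff, Nat.mod_eq_of_lt (by omega), Nat.mod_eq_of_lt (by omega)]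
        omega
      omega

lemma land_eq_zero_of_lt_pow (a x m : ℕ) (ha : a < 2^m) (hx : x % 2^m = 0) : a &&& x = 0 := by
  rw [land_zero_iff]
  intro i ⟨hai, hxi⟩
  have him : i < m := by
    by_contra hc
    push_neg at hc
    have : a < 2^i := lt_of_lt_of_le ha (Nat.pow_le_pow_right (by norm_num) hc)
    rw [Nat.testBit_lt_two_pow this] at hai
    exact Bool.false_ne_true hai
  have := Nat.testBit_mod_two_pow x m i
  rw [hx] at this
  simp [him, hxi] at this

lemma cnt_G4 (m x z : ℕ) (hx : x % 2^m = 0) (hz : z % 2^m = 0) : cnt m x z = 2^m - 1 := by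
  have hM : 1 ≤ 2^m := Nat.one_le_two_pow
  unfold cnt
  rw [Finset.filter_true_of_mem, Finset.card_range]
  intro a ha
  simp only [Finset.mem_range] at ha
  exact ⟨land_eq_zero_of_lt_pow a x m (by omega) hx,
    land_eq_zero_of_lt_pow _ z m (by omega) hz⟩

lemma ulamAux_stab : ∀ L (w : List Bool), w.length ≤ L → w ≠ [] →
    ∀ n n', w.length ≤ n → w.length ≤ n' → (ulamAux n w ↔ ulamAux n' w) := by
  intro L
  induction L with
  | zero =>
    intro w hL hw
    exact absurd (List.eq_nil_of_length_eq_zero (by omega)) hw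
  | succ L ih =>
    intro w hL hw n n' hn hn'
    have hlen : 1 ≤ w.length := List.length_pos_iff.mpr hw
    obtain ⟨n₀, rfl⟩ : ∃ n₀, n = n₀ + 1 := ⟨n - 1, by omega⟩
    obtain ⟨n₀', rfl⟩ : ∃ n₀', n' = n₀' + 1 := ⟨n' - 1, by omega⟩
    show (if w.length = 1 then True else _) ↔ (if w.length = 1 then True else _)
    by_cases h1 : w.length = 1
    · simp [h1]
    · rw [if_neg h1, if_neg h1]
      apply existsUnique_congr
      intro p
      constructor
      · rintro ⟨hp1, hp2, hp3, hp4, hp5, hp6⟩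
        have hl1 : 1 ≤ p.1.length := List.length_pos_iff.mpr hp1
        have hl2 : 1 ≤ p.2.length := List.length_pos_iff.mpr hp2
        have hlw : w.length = p.1.length + p.2.length := by
          rw [hp4, List.length_append]
        refine ⟨hp1, hp2, hp3, hp4, ?_, ?_⟩
        · exact (ih p.1 (by omega) hp1 n₀ n₀' (by omega) (by omega)).mp hp5
        · exact (ih p.2 (by omega) hp2 n₀ n₀' (by omega) (by omega)).mp hp6
      · rintro ⟨hp1, hp2, hp3, hp4, hp5, hp6⟩
        have hl1 : 1 ≤ p.1.length := List.length_pos_iff.mpr hp1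
        have hl2 : 1 ≤ p.2.length := List.length_pos_iff.mpr hp2
        have hlw : w.length = p.1.length + p.2.length := by
          rw [hp4, List.length_append]
        refine ⟨hp1, hp2, hp3, hp4, ?_, ?_⟩
        · exact (ih p.1 (by omega) hp1 n₀ n₀' (by omega) (by omega)).mpr hp5
        · exact (ih p.2 (by omega) hp2 n₀ n₀' (by omega) (by omega)).mpr hp6

lemma ulamAux_iff_isUlam (w : List Bool) (hw : w ≠ []) (n : ℕ) (hn : w.length ≤ n) :
    ulamAux n w ↔ IsUlam w :=
  ulamAux_stab w.length w le_rfl hw n w.length hn le_rfl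

lemma isUlam_singleton (b : Bool) : IsUlam [b] := by
  show ulamAux 1 [b]
  simp [ulamAux]

/-- The fundamental recursion. -/
lemma isUlam_iff (w : List Bool) (hw : 2 ≤ w.length) :
    IsUlam w ↔ ∃! p : List Bool × List Bool,
      p.1 ≠ [] ∧ p.2 ≠ [] ∧ p.1 ≠ p.2 ∧ w = p.1 ++ p.2 ∧ IsUlam p.1 ∧ IsUlam p.2 := by
  have hw' : w ≠ [] := List.ne_nil_of_length_pos (by omega)
  obtain ⟨L, hL⟩ : ∃ L, w.length = L + 1 := ⟨w.length - 1, by omega⟩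
  unfold IsUlam
  rw [hL]
  show (if w.length = 1 then True else _) ↔ _
  rw [if_neg (by omega)]
  apply existsUnique_congr
  intro p
  constructor
  · rintro ⟨hp1, hp2, hp3, hp4, hp5, hp6⟩
    have hl1 : 1 ≤ p.1.length := List.length_pos_iff.mpr hp1
    have hl2 : 1 ≤ p.2.length := List.length_pos_iff.mpr hp2
    have hlw : w.length = p.1.length + p.2.length := by rw [hp4, List.length_append]
    exact ⟨hp1, hp2, hp3, hp4,
      (ulamAux_iff_isUlam p.1 hp1 L (by omega)).mp hp5,
      (ulamAux_iff_isUlam p.2 hp2 L (by omega)).mp hp6⟩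
  · rintro ⟨hp1, hp2, hp3, hp4, hp5, hp6⟩
    have hl1 : 1 ≤ p.1.length := List.length_pos_iff.mpr hp1
    have hl2 : 1 ≤ p.2.length := List.length_pos_iff.mpr hp2
    have hlw : w.length = p.1.length + p.2.length := by rw [hp4, List.length_append]
    exact ⟨hp1, hp2, hp3, hp4,
      (ulamAux_iff_isUlam p.1 hp1 L (by omega)).mpr hp5,
      (ulamAux_iff_isUlam p.2 hp2 L (by omega)).mpr hp6⟩

lemma isUlam_replicate_false : ∀ j, IsUlam (List.replicate j false) ↔ j = 1 := by
  intro j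
  induction j using Nat.strong_induction_on with
  | _ j ih =>
    match j with
    | 0 => simpa [IsUlam] using (by simp [ulamAux] : ¬ ulamAux 0 [])
    | 1 => simpa using isUlam_singleton false
    | (j+2) =>
      constructor
      · intro h
        exfalso
        rw [isUlam_iff _ (by simp)] at h
        obtain ⟨p, ⟨hp1, hp2, hp3, hp4, hp5, hp6⟩, -⟩ := h
        have h1 : p.1 = List.replicate p.1.length false := by
          rw [List.eq_replicate_iff]
          refine ⟨rfl, fun b hb => ?_⟩
          have : b ∈ List.replicate (j+2) false := by
            rw [hp4]; exact List.mem_append_left _ hb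
          exact List.eq_of_mem_replicate this
        have h2 : p.2 = List.replicate p.2.length false := by
          rw [List.eq_replicate_iff]
          refine ⟨rfl, fun b hb => ?_⟩
          have : b ∈ List.replicate (j+2) false := by
            rw [hp4]; exact List.mem_append_right _ hb
          exact List.eq_of_mem_replicate this
        have hlw : j + 2 = p.1.length + p.2.length := by
          have := congrArg List.length hp4
          simpa using this
        have hl1 : 1 ≤ p.1.length := List.length_pos_iff.mpr hp1
        have hl2 : 1 ≤ p.2.length := List.length_pos_iff.mpr hp2
        rw [h1] at hp5
        rw [h2] at hp6
        have e1 : p.1.length = 1 := (ih p.1.length (by omega) ).mp hp5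
        have e2 : p.2.length = 1 := (ih p.2.length (by omega)).mp hp6
        exact hp3 (by rw [h1, h2, e1, e2])
      · intro h; omega

/-- Unique decomposition into pairs iff unique split index. -/
lemma existsUnique_pair_iff_idx (w : List Bool) :
    (∃! p : List Bool × List Bool,
      p.1 ≠ [] ∧ p.2 ≠ [] ∧ p.1 ≠ p.2 ∧ w = p.1 ++ p.2 ∧ IsUlam p.1 ∧ IsUlam p.2) ↔
    (∃! i, 1 ≤ i ∧ i < w.length ∧ w.take i ≠ w.drop i ∧ IsUlam (w.take i) ∧ IsUlam (w.drop i)) := by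
  constructor
  · rintro ⟨p, ⟨hp1, hp2, hp3, hp4, hp5, hp6⟩, hu⟩
    have hl1 : 1 ≤ p.1.length := List.length_pos_iff.mpr hp1
    have hl2 : 1 ≤ p.2.length := List.length_pos_iff.mpr hp2
    have hlw : w.length = p.1.length + p.2.length := by rw [hp4, List.length_append]
    have ht : w.take p.1.length = p.1 := by rw [hp4]; exact List.take_left' rfl
    have hd : w.drop p.1.length = p.2 := by rw [hp4]; exact List.drop_left' rfl
    refine ⟨p.1.length, ⟨by omega, by omega, by rw [ht, hd]; exact hp3,
      by rw [ht]; exact hp5, by rw [hd]; exact hp6⟩, ?_⟩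
    rintro j ⟨hj1, hj2, hj3, hj4, hj5⟩
    have htj : (w.take j).length = j := List.length_take_of_le (by omega)
    have heq : (w.take j, w.drop j) = p := by
      apply hu
      refine ⟨List.ne_nil_of_length_pos (by rw [htj]; omega),
        List.ne_nil_of_length_pos (by rw [List.length_drop]; omega),
        hj3, (List.take_append_drop j w).symm, hj4, hj5⟩
    have := congrArg (fun q => q.1.length) heq
    simpa [htj] using this
  · rintro ⟨i, ⟨hi1, hi2, hi3, hi4, hi5⟩, hu⟩
    have hti : (w.take i).length = i := List.length_take_of_le (by omega)
    refine ⟨(w.take i, w.drop i), ⟨List.ne_nil_of_length_pos (by rw [hti]; omega),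
      List.ne_nil_of_length_pos (by rw [List.length_drop]; omega),
      hi3, (List.take_append_drop i w).symm, hi4, hi5⟩, ?_⟩
    rintro p ⟨hp1, hp2, hp3, hp4, hp5, hp6⟩
    have hl1 : 1 ≤ p.1.length := List.length_pos_iff.mpr hp1
    have hl2 : 1 ≤ p.2.length := List.length_pos_iff.mpr hp2
    have hlw : w.length = p.1.length + p.2.length := by rw [hp4, List.length_append]
    have ht : w.take p.1.length = p.1 := by rw [hp4]; exact List.take_left' rfl
    have hd : w.drop p.1.length = p.2 := by rw [hp4]; exact List.drop_left' rfl
    have : p.1.length = i := by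
      apply hu
      exact ⟨by omega, by omega, by rw [ht, hd]; exact hp3, by rw [ht]; exact hp5,
        by rw [hd]; exact hp6⟩
    rw [← this]
    exact Prod.ext_iff.mpr ⟨ht.symm, hd.symm⟩

lemma isUlam_iff_idx (w : List Bool) (hw : 2 ≤ w.length) :
    IsUlam w ↔ ∃! i, 1 ≤ i ∧ i < w.length ∧ w.take i ≠ w.drop i ∧
      IsUlam (w.take i) ∧ IsUlam (w.drop i) := by
  rw [isUlam_iff w hw, existsUnique_pair_iff_idx]

-- word shape lemmas
lemma wordTwo_eq (x y : ℕ) : wordTwo x y = List.replicate x false ++ (true :: List.replicate y false) := by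
  simp [wordTwo]

lemma wordThree_eq (x y z : ℕ) : wordThree x y z =
    List.replicate x false ++ (true :: (List.replicate y false ++ (true :: List.replicate z false))) := by
  simp [wordThree]

lemma wordTwo_length (x y : ℕ) : (wordTwo x y).length = x + y + 1 := by
  simp [wordTwo_eq]; omega

lemma wordThree_length (x y z : ℕ) : (wordThree x y z).length = x + y + z + 2 := by
  simp [wordThree_eq]; omega

lemma wordTwo_ne_nil (x y : ℕ) : wordTwo x y ≠ [] :=
  List.ne_nil_of_length_pos (by rw [wordTwo_length]; omega)

lemma true_mem_wordTwo (x y : ℕ) : true ∈ wordTwo x y := by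
  rw [wordTwo_eq]; exact List.mem_append_right _ List.mem_cons_self

lemma true_mem_wordThree (x y z : ℕ) : true ∈ wordThree x y z := by
  rw [wordThree_eq]; exact List.mem_append_right _ List.mem_cons_self

lemma wordTwo_ne_replicate (x y c : ℕ) : wordTwo x y ≠ List.replicate c false := by
  intro h
  have := List.eq_of_mem_replicate (h ▸ true_mem_wordTwo x y)
  exact Bool.true_eq_false ▸ (by simpa using this)

lemma wordThree_ne_replicate (x y z c : ℕ) : wordThree x y z ≠ List.replicate c false := by
  intro h
  have := List.eq_of_mem_replicate (h ▸ true_mem_wordThree x y z)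
  simpa using this

lemma replicate_ne_wordTwo (x y c : ℕ) : List.replicate c false ≠ wordTwo x y :=
  fun h => wordTwo_ne_replicate x y c h.symm

lemma replicate_true_inj : ∀ x x' (l l' : List Bool),
    List.replicate x false ++ true :: l = List.replicate x' false ++ true :: l' →
    x = x' ∧ l = l' := by
  intro x
  induction x with
  | zero =>
    intro x' l l' h
    cases x' with
    | zero => simpa using h
    | succ s => simp [List.replicate_succ] at h
  | succ s ih =>
    intro x' l l' h
    cases x' with
    | zero => simp [List.replicate_succ] at h
    | succ s' =>
      simp only [List.replicate_succ, List.cons_append, List.cons.injEq] at h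
      obtain ⟨-, h2⟩ := h
      obtain ⟨h3, h4⟩ := ih s' l l' h2
      exact ⟨by omega, h4⟩

lemma wordTwo_injective (x y x' y' : ℕ) (h : wordTwo x y = wordTwo x' y') : x = x' ∧ y = y' := by
  rw [wordTwo_eq, wordTwo_eq] at h
  obtain ⟨h1, h2⟩ := replicate_true_inj x x' _ _ h
  have := congrArg List.length h2
  simp at this
  exact ⟨h1, this⟩

/-- wordTwo ≠ wordThree (count of trues). -/
lemma wordTwo_ne_wordThree (x y x' y' z' : ℕ) : wordTwo x y ≠ wordThree x' y' z' := by
  intro h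
  have := congrArg (fun l => l.count true) h
  simp only [wordTwo_eq, wordThree_eq, List.count_append, List.count_cons, List.count_replicate] at this
  norm_num at this

-- ### S2: wordTwo characterization
attribute [local instance 10] Classical.propDecidable

lemma take_drop_of_append (w u v : List Bool) (i : ℕ) (h : w = u ++ v) (hl : u.length = i) :
    w.take i = u ∧ w.drop i = v :=
  ⟨by rw [h]; exact List.take_left' hl, by rw [h]; exact List.drop_left' hl⟩

lemma wordTwo_split1 (x y i : ℕ) (hi : i ≤ x) :
    wordTwo x y = List.replicate i false ++ wordTwo (x-i) y := by
  rw [wordTwo_eq, wordTwo_eq, ← List.append_assoc, ← List.replicate_add]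
  congr 2
  omega

lemma wordTwo_split2 (x y j : ℕ) (hj : j ≤ y) :
    wordTwo x y = wordTwo x j ++ List.replicate (y-j) false := by
  rw [wordTwo_eq, wordTwo_eq, List.append_assoc]
  congr 1
  rw [List.cons_append]
  congr 1
  rw [← List.replicate_add]
  congr 1
  omega

lemma wordThree_split1 (x y z i : ℕ) (hi : i ≤ x) :
    wordThree x y z = List.replicate i false ++ wordThree (x-i) y z := by
  rw [wordThree_eq, wordThree_eq, ← List.append_assoc, ← List.replicate_add]
  congr 2
  omega

lemma wordThree_split2 (x y z j : ℕ) (hj : j ≤ y) :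
    wordThree x y z = wordTwo x j ++ wordTwo (y-j) z := by
  rw [wordThree_eq, wordTwo_eq, wordTwo_eq, List.append_assoc]
  congr 1
  rw [List.cons_append]
  congr 1
  rw [← List.append_assoc, ← List.replicate_add]
  congr 2
  omega

lemma wordThree_split3 (x y z j : ℕ) (hj : j ≤ z) :
    wordThree x y z = wordThree x y j ++ List.replicate (z-j) false := by
  rw [wordThree_eq, wordThree_eq, List.append_assoc]
  congr 1
  rw [List.cons_append]
  congr 1
  rw [List.append_assoc]
  congr 1
  rw [List.cons_append]
  congr 1
  rw [← List.replicate_add]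
  congr 1
  omega

lemma ite_irrel (A : Prop) (i1 i2 : Decidable A) (a b : ℕ) :
    @ite _ A i1 a b = @ite _ A i2 a b := by
  rcases i1 with h1 | h1 <;> rcases i2 with h2 | h2 <;> simp_all

lemma existsUnique_two_cases (a b : ℕ) (A B : Prop) (hab : A → B → a ≠ b) :
    (∃! i : ℕ, (i = a ∧ A) ∨ (i = b ∧ B)) ↔
    ((if A then 1 else 0) + (if B then 1 else 0) = (1:ℕ)) := by
  by_cases hA : A <;> by_cases hB : B
  · rw [if_pos hA, if_pos hB]
    constructor
    · rintro ⟨i, -, hu⟩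
      have h1 : a = i := hu a (Or.inl ⟨rfl, hA⟩)
      have h2 : b = i := hu b (Or.inr ⟨rfl, hB⟩)
      exact absurd (h1.trans h2.symm) (hab hA hB)
    · intro h; omega
  · rw [if_pos hA, if_neg hB]
    constructor
    · intro _; rfl
    · intro _
      refine ⟨a, Or.inl ⟨rfl, hA⟩, ?_⟩
      rintro i (⟨rfl, -⟩ | ⟨rfl, hB'⟩)
      · rfl
      · exact absurd hB' hB
  · rw [if_neg hA, if_pos hB]
    constructor
    · intro _; rfl
    · intro _
      refine ⟨b, Or.inr ⟨rfl, hB⟩, ?_⟩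
      rintro i (⟨rfl, hA'⟩ | ⟨rfl, -⟩)
      · exact absurd hA' hA
      · rfl
  · rw [if_neg hA, if_neg hB]
    constructor
    · rintro ⟨i, (⟨rfl, hA'⟩ | ⟨rfl, hB'⟩), -⟩
      · exact absurd hA' hA
      · exact absurd hB' hB
    · intro h; omega

lemma isUlam_wordTwo_rec (x y : ℕ) (h : 1 ≤ x + y) :
    IsUlam (wordTwo x y) ↔
      ((if 1 ≤ x ∧ IsUlam (wordTwo (x-1) y) then 1 else 0) +
       (if 1 ≤ y ∧ IsUlam (wordTwo x (y-1)) then 1 else 0) = 1) := by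
  rw [isUlam_iff_idx _ (by rw [wordTwo_length]; omega)]
  have hQ : ∀ i : ℕ, (1 ≤ i ∧ i < (wordTwo x y).length ∧
      (wordTwo x y).take i ≠ (wordTwo x y).drop i ∧
      IsUlam ((wordTwo x y).take i) ∧ IsUlam ((wordTwo x y).drop i)) ↔
      ((i = 1 ∧ (1 ≤ x ∧ IsUlam (wordTwo (x-1) y))) ∨
       (i = x+y ∧ (1 ≤ y ∧ IsUlam (wordTwo x (y-1))))) := by
    intro i
    rw [wordTwo_length]
    constructor
    · rintro ⟨hi1, hi2, hi3, hi4, hi5⟩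
      rcases le_or_gt i x with hix | hix
      · obtain ⟨ht, hd⟩ := take_drop_of_append _ _ _ i (wordTwo_split1 x y i hix)
          (by rw [List.length_replicate])
        rw [ht] at hi4
        have hione : i = 1 := (isUlam_replicate_false i).mp hi4
        left
        refine ⟨hione, by omega, ?_⟩
        rw [hd] at hi5
        subst hione
        exact hi5
      · set j := i - (x+1) with hjdef
        have hjy : j ≤ y := by omega
        obtain ⟨ht, hd⟩ := take_drop_of_append _ _ _ i (wordTwo_split2 x y j hjy)
          (by rw [wordTwo_length]; omega)
        rw [hd] at hi5
        have hyj : y - j = 1 := by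
          have := (isUlam_replicate_false (y-j)).mp hi5
          omega
        right
        have hjval : j = y - 1 := by omega
        refine ⟨by omega, by omega, ?_⟩
        rw [ht] at hi4
        rw [← hjval]
        exact hi4
    · rintro (⟨rfl, hx1, hU⟩ | ⟨rfl, hy1, hU⟩)
      · obtain ⟨ht, hd⟩ := take_drop_of_append _ _ _ 1 (wordTwo_split1 x y 1 hx1)
          (by rw [List.length_replicate])
        refine ⟨le_rfl, by omega, ?_, ?_, ?_⟩
        · rw [ht, hd]
          exact replicate_ne_wordTwo _ _ _
        · rw [ht]
          exact (isUlam_replicate_false 1).mpr rfl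
        · rw [hd]; exact hU
      · obtain ⟨ht, hd⟩ := take_drop_of_append _ _ _ (x+y) (wordTwo_split2 x y (y-1) (by omega))
          (by rw [wordTwo_length]; omega)
        have hyy : y - (y-1) = 1 := by omega
        refine ⟨by omega, by omega, ?_, ?_, ?_⟩
        · rw [ht, hd]
          exact wordTwo_ne_replicate _ _ _
        · rw [ht]; exact hU
        · rw [hd, hyy]
          exact (isUlam_replicate_false 1).mpr rfl
  have h2 := existsUnique_two_cases 1 (x+y) (1 ≤ x ∧ IsUlam (wordTwo (x-1) y))
    (1 ≤ y ∧ IsUlam (wordTwo x (y-1))) (fun hA hB => by have := hA.1; have := hB.1; omega)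
  rw [existsUnique_congr hQ, h2]
  congr! 1
  congr 1 <;> exact ite_irrel _ _ _ _ _

lemma land_rec : ∀ s x y : ℕ, x + y = s → 1 ≤ s →
    (x &&& y = 0 ↔ ((if 1 ≤ x ∧ (x-1) &&& y = 0 then 1 else 0) +
      (if 1 ≤ y ∧ x &&& (y-1) = 0 then 1 else 0) = (1:ℕ))) := by
  intro s
  induction s using Nat.strong_induction_on with
  | _ s ih =>
  intro x y hs h1
  rcases Nat.mod_two_eq_zero_or_one x with hx | hx <;>
    rcases Nat.mod_two_eq_zero_or_one y with hy | hy
  · -- both even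
    have hxy0 : ¬(x = 0 ∧ y = 0) := by omega
    have Hxy : x &&& y = 0 ↔ (x/2) &&& (y/2) = 0 := by
      rw [land_master]
      constructor
      · exact fun h => h.2
      · exact fun h => ⟨Or.inl hx, h⟩
    have HA : (1 ≤ x ∧ (x-1) &&& y = 0) ↔ (1 ≤ x/2 ∧ (x/2-1) &&& (y/2) = 0) := by
      constructor
      · rintro ⟨h1x, h2x⟩
        have hx2 : 2 ≤ x := by omega
        rw [land_master] at h2x
        have e : (x-1)/2 = x/2 - 1 := by omega
        rw [e] at h2x
        exact ⟨by omega, h2x.2⟩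
      · rintro ⟨h1x, h2x⟩
        have hx2 : 2 ≤ x := by omega
        refine ⟨by omega, ?_⟩
        rw [land_master]
        have e : (x-1)/2 = x/2 - 1 := by omega
        rw [e]
        exact ⟨Or.inr hy, h2x⟩
    have HB : (1 ≤ y ∧ x &&& (y-1) = 0) ↔ (1 ≤ y/2 ∧ (x/2) &&& (y/2-1) = 0) := by
      constructor
      · rintro ⟨h1y, h2y⟩
        have hy2 : 2 ≤ y := by omega
        rw [land_master] at h2y
        have e : (y-1)/2 = y/2 - 1 := by omega
        rw [e] at h2y
        exact ⟨by omega, h2y.2⟩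
      · rintro ⟨h1y, h2y⟩
        have hy2 : 2 ≤ y := by omega
        refine ⟨by omega, ?_⟩
        rw [land_master]
        have e : (y-1)/2 = y/2 - 1 := by omega
        rw [e]
        exact ⟨Or.inl (by omega), h2y⟩
    have hIH := ih (x/2 + y/2) (by omega) (x/2) (y/2) rfl (by omega)
    rw [Hxy, hIH]
    by_cases hP : 1 ≤ x/2 ∧ (x/2-1) &&& (y/2) = 0 <;>
      by_cases hQ : 1 ≤ y/2 ∧ (x/2) &&& (y/2-1) = 0
    · rw [if_pos hP, if_pos hQ, if_pos (HA.mpr hP), if_pos (HB.mpr hQ)]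
    · rw [if_pos hP, if_neg hQ, if_pos (HA.mpr hP), if_neg (fun hc => hQ (HB.mp hc))]
    · rw [if_neg hP, if_pos hQ, if_neg (fun hc => hP (HA.mp hc)), if_pos (HB.mpr hQ)]
    · rw [if_neg hP, if_neg hQ, if_neg (fun hc => hP (HA.mp hc)), if_neg (fun hc => hQ (HB.mp hc))]
  · -- x even, y odd
    have Hxy : x &&& y = 0 ↔ (x/2) &&& (y/2) = 0 := by
      rw [land_master]
      constructor
      · exact fun h => h.2
      · exact fun h => ⟨Or.inl hx, h⟩
    have HB : (1 ≤ y ∧ x &&& (y-1) = 0) ↔ (x/2) &&& (y/2) = 0 := by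
      constructor
      · rintro ⟨h1y, h2y⟩
        rw [land_master] at h2y
        have e : (y-1)/2 = y/2 := by omega
        rw [e] at h2y
        exact h2y.2
      · intro hf
        refine ⟨by omega, ?_⟩
        rw [land_master]
        have e : (y-1)/2 = y/2 := by omega
        rw [e]
        exact ⟨Or.inr (by omega), hf⟩
    have hAfalse : ¬(1 ≤ x ∧ (x-1) &&& y = 0) := by
      rintro ⟨h1x, hc⟩
      exact land_odd_odd (x-1) y (by omega) hy hc
    rw [if_neg hAfalse, Nat.zero_add, Hxy]
    by_cases hf : (x/2) &&& (y/2) = 0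
    · rw [if_pos (HB.mpr hf)]
      simp [hf]
    · rw [if_neg (fun hc => hf (HB.mp hc))]
      simp [hf]
  · -- x odd, y even
    have Hxy : x &&& y = 0 ↔ (x/2) &&& (y/2) = 0 := by
      rw [land_master]
      constructor
      · exact fun h => h.2
      · exact fun h => ⟨Or.inr hy, h⟩
    have HA : (1 ≤ x ∧ (x-1) &&& y = 0) ↔ (x/2) &&& (y/2) = 0 := by
      constructor
      · rintro ⟨h1x, h2x⟩
        rw [land_master] at h2x
        have e : (x-1)/2 = x/2 := by omega
        rw [e] at h2x
        exact h2x.2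
      · intro hf
        refine ⟨by omega, ?_⟩
        rw [land_master]
        have e : (x-1)/2 = x/2 := by omega
        rw [e]
        exact ⟨Or.inl (by omega), hf⟩
    have hBfalse : ¬(1 ≤ y ∧ x &&& (y-1) = 0) := by
      rintro ⟨h1y, hc⟩
      exact land_odd_odd x (y-1) hx (by omega) hc
    rw [if_neg hBfalse, Nat.add_zero, Hxy]
    by_cases hf : (x/2) &&& (y/2) = 0
    · rw [if_pos (HA.mpr hf)]
      simp [hf]
    · rw [if_neg (fun hc => hf (HA.mp hc))]
      simp [hf]
  · -- both odd
    have Hxy := land_odd_odd x y hx hy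
    have HA : (1 ≤ x ∧ (x-1) &&& y = 0) ↔ (x/2) &&& (y/2) = 0 := by
      constructor
      · rintro ⟨h1x, h2x⟩
        rw [land_master] at h2x
        have e : (x-1)/2 = x/2 := by omega
        rw [e] at h2x
        exact h2x.2
      · intro hf
        refine ⟨by omega, ?_⟩
        rw [land_master]
        have e : (x-1)/2 = x/2 := by omega
        rw [e]
        exact ⟨Or.inl (by omega), hf⟩
    have HB : (1 ≤ y ∧ x &&& (y-1) = 0) ↔ (x/2) &&& (y/2) = 0 := by
      constructor
      · rintro ⟨h1y, h2y⟩
        rw [land_master] at h2y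
        have e : (y-1)/2 = y/2 := by omega
        rw [e] at h2y
        exact h2y.2
      · intro hf
        refine ⟨by omega, ?_⟩
        rw [land_master]
        have e : (y-1)/2 = y/2 := by omega
        rw [e]
        exact ⟨Or.inr (by omega), hf⟩
    constructor
    · intro h; exact absurd h Hxy
    · intro h
      exfalso
      by_cases hf : (x/2) &&& (y/2) = 0
      · rw [if_pos (HA.mpr hf), if_pos (HB.mpr hf)] at h
        omega
      · rw [if_neg (fun hc => hf (HA.mp hc)), if_neg (fun hc => hf (HB.mp hc))] at h
        omega

lemma isUlam_wordTwo : ∀ x y : ℕ, IsUlam (wordTwo x y) ↔ x &&& y = 0 := by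
  have key : ∀ s x y : ℕ, x + y = s → (IsUlam (wordTwo x y) ↔ x &&& y = 0) := by
    intro s
    induction s using Nat.strong_induction_on with
    | _ s ih =>
    intro x y hs
    rcases Nat.eq_zero_or_pos s with rfl | hpos
    · have hx : x = 0 := by omega
      have hy : y = 0 := by omega
      subst hx; subst hy
      have : wordTwo 0 0 = [true] := by rw [wordTwo_eq]; rfl
      rw [this]
      simp [isUlam_singleton]
    · rw [isUlam_wordTwo_rec x y (by omega), land_rec s x y hs hpos]
      have HA : (1 ≤ x ∧ IsUlam (wordTwo (x-1) y)) ↔ (1 ≤ x ∧ (x-1) &&& y = 0) := by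
        constructor
        · rintro ⟨h1, h2⟩
          exact ⟨h1, (ih (x-1+y) (by omega) (x-1) y rfl).mp h2⟩
        · rintro ⟨h1, h2⟩
          exact ⟨h1, (ih (x-1+y) (by omega) (x-1) y rfl).mpr h2⟩
      have HB : (1 ≤ y ∧ IsUlam (wordTwo x (y-1))) ↔ (1 ≤ y ∧ x &&& (y-1) = 0) := by
        constructor
        · rintro ⟨h1, h2⟩
          exact ⟨h1, (ih (x+(y-1)) (by omega) x (y-1) rfl).mp h2⟩
        · rintro ⟨h1, h2⟩
          exact ⟨h1, (ih (x+(y-1)) (by omega) x (y-1) rfl).mpr h2⟩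
      by_cases hP : 1 ≤ x ∧ (x-1) &&& y = 0 <;> by_cases hQ : 1 ≤ y ∧ x &&& (y-1) = 0
      · rw [if_pos hP, if_pos hQ, if_pos (HA.mpr hP), if_pos (HB.mpr hQ)]
      · rw [if_pos hP, if_neg hQ, if_pos (HA.mpr hP), if_neg (fun hc => hQ (HB.mp hc))]
      · rw [if_neg hP, if_pos hQ, if_neg (fun hc => hP (HA.mp hc)), if_pos (HB.mpr hQ)]
      · rw [if_neg hP, if_neg hQ, if_neg (fun hc => hP (HA.mp hc)),
          if_neg (fun hc => hQ (HB.mp hc))]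
  exact fun x y => key (x+y) x y rfl

-- ### S3: wordThree recursion

lemma replicate_ne_wordThree (x y z c : ℕ) : List.replicate c false ≠ wordThree x y z :=
  fun h => wordThree_ne_replicate x y z c h.symm

lemma card_filter_eq_one_iff (N : ℕ) (P : ℕ → Prop) [DecidablePred P] :
    ((Finset.range N).filter P).card = 1 ↔ ∃! j, j < N ∧ P j := by
  rw [Finset.card_eq_one]
  constructor
  · rintro ⟨a, ha⟩
    have haa : a ∈ (Finset.range N).filter P := ha ▸ Finset.mem_singleton_self a
    rw [Finset.mem_filter, Finset.mem_range] at haa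
    refine ⟨a, haa, ?_⟩
    intro j hj
    have hjm : j ∈ (Finset.range N).filter P := by
      rw [Finset.mem_filter, Finset.mem_range]; exact hj
    rw [ha] at hjm
    exact Finset.mem_singleton.mp hjm
  · rintro ⟨a, ha, hu⟩
    refine ⟨a, ?_⟩
    ext b
    simp only [Finset.mem_filter, Finset.mem_range, Finset.mem_singleton]
    constructor
    · intro hb; exact hu b hb
    · rintro rfl; exact ha

lemma existsUnique_three_cases (x y z : ℕ) (A B : Prop) [Decidable A] [Decidable B]
    (P : ℕ → Prop) [DecidablePred P] :
    (∃! i : ℕ, (i = 1 ∧ 1 ≤ x ∧ A) ∨ (∃ j, j ≤ y ∧ i = x+1+j ∧ P j) ∨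
      (i = x+y+z+1 ∧ 1 ≤ z ∧ B)) ↔
    ((if 1 ≤ x ∧ A then 1 else 0) + ((Finset.range (y+1)).filter P).card +
     (if 1 ≤ z ∧ B then 1 else 0) = 1) := by
  by_cases hA : 1 ≤ x ∧ A <;> by_cases hB : 1 ≤ z ∧ B
  · rw [if_pos hA, if_pos hB]
    constructor
    · rintro ⟨i, -, hu⟩
      have h1 : 1 = i := hu 1 (Or.inl ⟨rfl, hA⟩)
      have h2 : x+y+z+1 = i := hu (x+y+z+1) (Or.inr (Or.inr ⟨rfl, hB⟩))
      have := hA.1; have := hB.1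
      omega
    · intro h; omega
  · rw [if_pos hA, if_neg hB]
    constructor
    · rintro ⟨i, -, hu⟩
      have h1 : 1 = i := hu 1 (Or.inl ⟨rfl, hA⟩)
      by_contra hcon
      have hcne : ((Finset.range (y+1)).filter P).card ≠ 0 := by omega
      obtain ⟨j, hj⟩ := (Finset.card_pos.mp (Nat.pos_of_ne_zero hcne)).exists_mem
      rw [Finset.mem_filter, Finset.mem_range] at hj
      have h2 : x+1+j = i := hu (x+1+j) (Or.inr (Or.inl ⟨j, by omega, rfl, hj.2⟩))
      have := hA.1
      omega
    · intro h
      have hc0 : (Finset.range (y+1)).filter P = ∅ := by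
        rw [← Finset.card_eq_zero]; omega
      refine ⟨1, Or.inl ⟨rfl, hA⟩, ?_⟩
      rintro i (⟨rfl, -⟩ | ⟨j, hjy, rfl, hPj⟩ | ⟨rfl, hzB⟩)
      · rfl
      · exfalso
        have hjm : j ∈ (Finset.range (y+1)).filter P := by
          rw [Finset.mem_filter, Finset.mem_range]; exact ⟨by omega, hPj⟩
        rw [hc0] at hjm
        simp at hjm
      · exact absurd hzB hB
  · rw [if_neg hA, if_pos hB]
    constructor
    · rintro ⟨i, -, hu⟩
      have h1 : x+y+z+1 = i := hu (x+y+z+1) (Or.inr (Or.inr ⟨rfl, hB⟩))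
      by_contra hcon
      have hcne : ((Finset.range (y+1)).filter P).card ≠ 0 := by omega
      obtain ⟨j, hj⟩ := (Finset.card_pos.mp (Nat.pos_of_ne_zero hcne)).exists_mem
      rw [Finset.mem_filter, Finset.mem_range] at hj
      have h2 : x+1+j = i := hu (x+1+j) (Or.inr (Or.inl ⟨j, by omega, rfl, hj.2⟩))
      have := hB.1
      omega
    · intro h
      have hc0 : (Finset.range (y+1)).filter P = ∅ := by
        rw [← Finset.card_eq_zero]; omega
      refine ⟨x+y+z+1, Or.inr (Or.inr ⟨rfl, hB⟩), ?_⟩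
      rintro i (⟨rfl, hxA⟩ | ⟨j, hjy, rfl, hPj⟩ | ⟨rfl, -⟩)
      · exact absurd hxA hA
      · exfalso
        have hjm : j ∈ (Finset.range (y+1)).filter P := by
          rw [Finset.mem_filter, Finset.mem_range]; exact ⟨by omega, hPj⟩
        rw [hc0] at hjm
        simp at hjm
      · rfl
  · rw [if_neg hA, if_neg hB]
    have key : (∃! i : ℕ, (i = 1 ∧ 1 ≤ x ∧ A) ∨ (∃ j, j ≤ y ∧ i = x+1+j ∧ P j) ∨
        (i = x+y+z+1 ∧ 1 ≤ z ∧ B)) ↔ (∃! j, j < y+1 ∧ P j) := by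
      constructor
      · rintro ⟨i, (⟨rfl, hxA⟩ | ⟨j, hjy, rfl, hPj⟩ | ⟨rfl, hzB⟩), hu⟩
        · exact absurd hxA hA
        · refine ⟨j, ⟨by omega, hPj⟩, ?_⟩
          rintro j' ⟨hj', hPj'⟩
          have := hu (x+1+j') (Or.inr (Or.inl ⟨j', by omega, rfl, hPj'⟩))
          omega
        · exact absurd hzB hB
      · rintro ⟨j, ⟨hjy, hPj⟩, hju⟩
        refine ⟨x+1+j, Or.inr (Or.inl ⟨j, by omega, rfl, hPj⟩), ?_⟩
        rintro i (⟨rfl, hxA⟩ | ⟨j', hj', rfl, hPj'⟩ | ⟨rfl, hzB⟩)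
        · exact absurd hxA hA
        · have := hju j' ⟨by omega, hPj'⟩
          omega
        · exact absurd hzB hB
    rw [key, ← card_filter_eq_one_iff]
    omega

lemma isUlam_wordThree_rec (x y z : ℕ) :
    IsUlam (wordThree x y z) ↔
      ((if 1 ≤ x ∧ IsUlam (wordThree (x-1) y z) then 1 else 0) +
       ((Finset.range (y+1)).filter
          (fun j => j &&& x = 0 ∧ (y-j) &&& z = 0 ∧ ¬(x = y - j ∧ j = z))).card +
       (if 1 ≤ z ∧ IsUlam (wordThree x y (z-1)) then 1 else 0) = 1) := by
  rw [isUlam_iff_idx _ (by rw [wordThree_length]; omega)]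
  have hQ : ∀ i : ℕ, (1 ≤ i ∧ i < (wordThree x y z).length ∧
      (wordThree x y z).take i ≠ (wordThree x y z).drop i ∧
      IsUlam ((wordThree x y z).take i) ∧ IsUlam ((wordThree x y z).drop i)) ↔
      ((i = 1 ∧ 1 ≤ x ∧ IsUlam (wordThree (x-1) y z)) ∨
       (∃ j, j ≤ y ∧ i = x+1+j ∧
         (j &&& x = 0 ∧ (y-j) &&& z = 0 ∧ ¬(x = y - j ∧ j = z))) ∨
       (i = x+y+z+1 ∧ 1 ≤ z ∧ IsUlam (wordThree x y (z-1)))) := by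
    intro i
    rw [wordThree_length]
    constructor
    · rintro ⟨hi1, hi2, hi3, hi4, hi5⟩
      rcases le_or_gt i x with hix | hix
      · -- left zone
        obtain ⟨ht, hd⟩ := take_drop_of_append _ _ _ i (wordThree_split1 x y z i hix)
          (by rw [List.length_replicate])
        rw [ht] at hi4
        have hione : i = 1 := (isUlam_replicate_false i).mp hi4
        left
        refine ⟨hione, by omega, ?_⟩
        rw [hd] at hi5
        subst hione
        exact hi5
      · rcases le_or_gt i (x+y+1) with him | him
        · -- middle zone
          set j := i - (x+1) with hjdef
          have hjy : j ≤ y := by omega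
          obtain ⟨ht, hd⟩ := take_drop_of_append _ _ _ i (wordThree_split2 x y z j hjy)
            (by rw [wordTwo_length]; omega)
          rw [ht] at hi4
          rw [hd] at hi5
          right; left
          refine ⟨j, hjy, by omega, ?_, ?_, ?_⟩
          · rw [Nat.land_comm]
            exact (isUlam_wordTwo x j).mp hi4
          · exact (isUlam_wordTwo (y-j) z).mp hi5
          · rintro ⟨he1, he2⟩
            rw [ht, hd] at hi3
            exact hi3 (by rw [← he1, ← he2])
        · -- right zone
          set j := i - (x+y+2) with hjdef
          have hjz : j ≤ z := by omega
          obtain ⟨ht, hd⟩ := take_drop_of_append _ _ _ i (wordThree_split3 x y z j hjz)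
            (by rw [wordThree_length]; omega)
          rw [hd] at hi5
          have hz1 : z - j = 1 := by
            have := (isUlam_replicate_false (z-j)).mp hi5
            omega
          right; right
          have hjval : j = z - 1 := by omega
          refine ⟨by omega, by omega, ?_⟩
          rw [ht] at hi4
          rw [← hjval]
          exact hi4
    · rintro (⟨rfl, hx1, hU⟩ | ⟨j, hjy, rfl, hP1, hP2, hP3⟩ | ⟨rfl, hz1, hU⟩)
      · obtain ⟨ht, hd⟩ := take_drop_of_append _ _ _ 1 (wordThree_split1 x y z 1 hx1)
          (by rw [List.length_replicate])
        refine ⟨le_rfl, by omega, ?_, ?_, ?_⟩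
        · rw [ht, hd]; exact replicate_ne_wordThree _ _ _ _
        · rw [ht]; exact (isUlam_replicate_false 1).mpr rfl
        · rw [hd]; exact hU
      · obtain ⟨ht, hd⟩ := take_drop_of_append _ _ _ (x+1+j) (wordThree_split2 x y z j hjy)
          (by rw [wordTwo_length]; omega)
        refine ⟨by omega, by omega, ?_, ?_, ?_⟩
        · rw [ht, hd]
          intro hcon
          obtain ⟨he1, he2⟩ := wordTwo_injective _ _ _ _ hcon
          exact hP3 ⟨he1, he2⟩
        · rw [ht]
          exact (isUlam_wordTwo x j).mpr (by rw [Nat.land_comm] at hP1; exact hP1)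
        · rw [hd]
          exact (isUlam_wordTwo (y-j) z).mpr hP2
      · obtain ⟨ht, hd⟩ := take_drop_of_append _ _ _ (x+y+z+1)
          (wordThree_split3 x y z (z-1) (by omega))
          (by rw [wordThree_length]; omega)
        have hzz : z - (z-1) = 1 := by omega
        refine ⟨by omega, by omega, ?_, ?_, ?_⟩
        · rw [ht, hd]; exact wordThree_ne_replicate _ _ _ _
        · rw [ht]; exact hU
        · rw [hd, hzz]; exact (isUlam_replicate_false 1).mpr rfl
  have h3 := existsUnique_three_cases x y z (IsUlam (wordThree (x-1) y z))
    (IsUlam (wordThree x y (z-1)))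
    (fun j => j &&& x = 0 ∧ (y-j) &&& z = 0 ∧ ¬(x = y - j ∧ j = z))
  rw [existsUnique_congr hQ, h3]

-- ### S5: main induction

def Tpred (n x z : ℕ) : Prop :=
  ((x+z) % n = n-1 ∧ x+z ≠ n-1) ∨ (x+z = n-2 ∧ x % 2 = 0 ∧ z % 2 = 0) ∨
  (x+z = n ∧ 0 < x ∧ 0 < z)

lemma Tpred_false_of (n x z : ℕ) (h1 : (x+z) % n ≠ n-1) (h2 : x+z ≠ n-2) (h3 : x+z ≠ n) :
    ¬ Tpred n x z := by
  rintro (⟨ha, -⟩ | ⟨ha, -⟩ | ⟨ha, -⟩)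
  · exact h1 ha
  · exact h2 ha
  · exact h3 ha

lemma rep_mod (n q r : ℕ) (hr : r < n) : (n*q + r) % n = r := by
  rw [Nat.mul_add_mod]
  exact Nat.mod_eq_of_lt hr

lemma four_le_pow (m : ℕ) (hm : 2 ≤ m) : 4 ≤ 2^m := by
  calc (4:ℕ) = 2^2 := by norm_num
  _ ≤ 2^m := Nat.pow_le_pow_right (by norm_num) hm

lemma pow_split (m : ℕ) (hm : 1 ≤ m) : 2^m = 2*2^(m-1) := by
  conv_lhs => rw [show m = (m-1)+1 by omega]
  rw [pow_succ]
  ring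

lemma two_pow_even (m : ℕ) (hm : 1 ≤ m) : 2^m % 2 = 0 := by
  have := pow_split m hm
  omega

lemma mid_eq_cnt (m x z : ℕ) (hm : 2 ≤ m) (hne : x + z ≠ 2^m - 2) :
    ((Finset.range (2^m-2+1)).filter
      (fun j => j &&& x = 0 ∧ (2^m-2-j) &&& z = 0 ∧ ¬(x = 2^m-2-j ∧ j = z))).card
    = cnt m x z := by
  have hn4 := four_le_pow m hm
  unfold cnt
  have hr : 2^m - 2 + 1 = 2^m - 1 := by omega
  rw [hr]
  congr 1
  apply Finset.filter_congr
  intro j hj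
  rw [Finset.mem_range] at hj
  constructor
  · rintro ⟨h1, h2, -⟩; exact ⟨h1, h2⟩
  · rintro ⟨h1, h2⟩
    refine ⟨h1, h2, ?_⟩
    rintro ⟨he1, he2⟩
    exact hne (by omega)

lemma mid_eq_cnt_land (m x z : ℕ) (hm : 2 ≤ m) (h0 : x &&& z ≠ 0) :
    ((Finset.range (2^m-2+1)).filter
      (fun j => j &&& x = 0 ∧ (2^m-2-j) &&& z = 0 ∧ ¬(x = 2^m-2-j ∧ j = z))).card
    = cnt m x z := by
  have hn4 := four_le_pow m hm
  unfold cnt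
  have hr : 2^m - 2 + 1 = 2^m - 1 := by omega
  rw [hr]
  congr 1
  apply Finset.filter_congr
  intro j hj
  rw [Finset.mem_range] at hj
  constructor
  · rintro ⟨h1, h2, -⟩; exact ⟨h1, h2⟩
  · rintro ⟨h1, h2⟩
    refine ⟨h1, h2, ?_⟩
    rintro ⟨he1, he2⟩
    subst he2
    rw [Nat.land_comm] at h1
    exact h0 h1

lemma mid_eq_cnt_sub (m x z : ℕ) (hm : 2 ≤ m) (heq : x + z = 2^m - 2) (h0 : x &&& z = 0) :
    ((Finset.range (2^m-2+1)).filter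
      (fun j => j &&& x = 0 ∧ (2^m-2-j) &&& z = 0 ∧ ¬(x = 2^m-2-j ∧ j = z))).card + 1
    = cnt m x z := by
  have hn4 := four_le_pow m hm
  unfold cnt
  have hr : 2^m - 2 + 1 = 2^m - 1 := by omega
  rw [hr]
  have hzy : z < 2^m - 1 := by omega
  have key : (Finset.range (2^m-1)).filter (fun j => j &&& x = 0 ∧ (2^m-2-j) &&& z = 0)
      = insert z ((Finset.range (2^m-1)).filter
          (fun j => j &&& x = 0 ∧ (2^m-2-j) &&& z = 0 ∧ ¬(x = 2^m-2-j ∧ j = z))) := by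
    ext j
    simp only [Finset.mem_insert, Finset.mem_filter, Finset.mem_range]
    constructor
    · rintro ⟨hj, h1, h2⟩
      by_cases hjz : j = z
      · left; exact hjz
      · right
        exact ⟨hj, h1, h2, fun hc => hjz hc.2⟩
    · rintro (hjz | ⟨hj, h1, h2, -⟩)
      · rw [hjz]
        refine ⟨hzy, ?_, ?_⟩
        · rw [Nat.land_comm]; exact h0
        · have he : 2^m-2-z = x := by omega
          rw [he]; exact h0
      · exact ⟨hj, h1, h2⟩
  rw [key, Finset.card_insert_of_notMem]
  intro hmem
  rw [Finset.mem_filter] at hmem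
  exact hmem.2.2.2 ⟨by omega, rfl⟩

lemma land_even_even_y (m x z : ℕ) (hm : 2 ≤ m) (h : x + z = 2^m - 2)
    (hx : x % 2 = 0) (hz : z % 2 = 0) : x &&& z = 0 := by
  have hn4 := four_le_pow m hm
  have hps := pow_split m (by omega)
  rw [land_master]
  refine ⟨Or.inl hx, land_of_add_eq_pow_sub_one (m-1) (x/2) (z/2) (by omega)⟩

lemma cnt_even_even_y (m x z : ℕ) (hm : 2 ≤ m) (h : x + z = 2^m - 2)
    (hx : x % 2 = 0) (hz : z % 2 = 0) : cnt m x z = 2 := by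
  have hn4 := four_le_pow m hm
  have hps := pow_split m (by omega)
  have hm1 : 1 ≤ m - 1 := by omega
  have hM : 1 ≤ 2^(m-1) := Nat.one_le_two_pow
  obtain ⟨m', hm'⟩ : ∃ m', m = m' + 1 := ⟨m-1, by omega⟩
  subst hm'
  simp only [Nat.add_sub_cancel] at hps hM hm1 ⊢
  rw [cnt_succ, if_pos ⟨hx, hz⟩]
  have hx2 : x/2 < 2^m' := by omega
  have hz2 : z/2 < 2^m' := by omega
  have e1 : cntOne m' (x/2) (z/2) = 1 := by
    rw [cntOne_eq_one_iff, Nat.mod_eq_of_lt hx2, Nat.mod_eq_of_lt hz2]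
    omega
  have e2 : cnt m' (x/2) (z/2) = 1 := by
    apply cnt_G1 m' _ _ (by omega)
    rw [Nat.mod_eq_of_lt (by omega)]
    omega
  omega

lemma cnt_odd_odd_y (m x z : ℕ) (hm : 2 ≤ m) (h : x + z = 2^m - 2)
    (hx : x % 2 = 1) (hz : z % 2 = 1) : cnt m x z % 2 = 0 := by
  have hn4 := four_le_pow m hm
  have hps := pow_split m (by omega)
  have hM : 1 ≤ 2^(m-1) := Nat.one_le_two_pow
  obtain ⟨m', hm'⟩ : ∃ m', m = m' + 1 := ⟨m-1, by omega⟩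
  subst hm'
  simp only [Nat.add_sub_cancel] at hps hM ⊢
  rw [cnt_succ, if_neg (by omega)]
  have hx2 : x/2 < 2^m' := by omega
  have hz2 : z/2 < 2^m' := by omega
  have e1 : cntOne m' (x/2) (z/2) % 2 = 0 := by
    apply cntOne_even_of_ne_one
    intro hone
    rw [cntOne_eq_one_iff, Nat.mod_eq_of_lt hx2, Nat.mod_eq_of_lt hz2] at hone
    omega
  omega

lemma cnt_pos_left (m x z : ℕ) (hm : 2 ≤ m) (hz : z % 2^m = 0) : 1 ≤ cnt m x z ∨ x &&& 0 ≠ 0 := by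
  left
  have hn4 := four_le_pow m hm
  apply Finset.card_pos.mpr
  refine ⟨0, ?_⟩
  rw [Finset.mem_filter, Finset.mem_range]
  refine ⟨by omega, by rw [Nat.zero_and], ?_⟩
  exact land_eq_zero_of_lt_pow _ z m (by omega) hz

lemma cnt_pos_of_z (m x z : ℕ) (hm : 2 ≤ m) (hz : z % 2^m = 0) : 1 ≤ cnt m x z := by
  have hn4 := four_le_pow m hm
  apply Finset.card_pos.mpr
  refine ⟨0, ?_⟩
  rw [Finset.mem_filter, Finset.mem_range]
  exact ⟨by omega, by rw [Nat.zero_and], land_eq_zero_of_lt_pow _ z m (by omega) hz⟩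

lemma cnt_pos_of_x (m x z : ℕ) (hm : 2 ≤ m) (hx : x % 2^m = 0) : 1 ≤ cnt m x z := by
  have hn4 := four_le_pow m hm
  apply Finset.card_pos.mpr
  refine ⟨2^m - 2, ?_⟩
  rw [Finset.mem_filter, Finset.mem_range]
  refine ⟨by omega, land_eq_zero_of_lt_pow (2^m-2) x m (by omega) hx, ?_⟩
  have he : 2^m - 2 - (2^m - 2) = 0 := by omega
  rw [he, Nat.zero_and]

lemma ulam_three_char (m : ℕ) (hm : 2 ≤ m) :
    ∀ s x z : ℕ, x + z = s → (IsUlam (wordThree x (2^m - 2) z) ↔ Tpred (2^m) x z) := by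
  intro s
  induction s using Nat.strong_induction_on with
  | _ s ih =>
  intro x z hs
  have hn4 : 4 ≤ 2^m := four_le_pow m hm
  have hnev : 2^m % 2 = 0 := two_pow_even m (by omega)
  rw [isUlam_wordThree_rec x (2^m - 2) z]
  have hA : (1 ≤ x ∧ IsUlam (wordThree (x-1) (2^m-2) z)) ↔ (1 ≤ x ∧ Tpred (2^m) (x-1) z) := by
    constructor
    · rintro ⟨h1, h2⟩
      exact ⟨h1, (ih (s-1) (by omega) (x-1) z (by omega)).mp h2⟩
    · rintro ⟨h1, h2⟩
      exact ⟨h1, (ih (s-1) (by omega) (x-1) z (by omega)).mpr h2⟩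
  have hB : (1 ≤ z ∧ IsUlam (wordThree x (2^m-2) (z-1))) ↔ (1 ≤ z ∧ Tpred (2^m) x (z-1)) := by
    constructor
    · rintro ⟨h1, h2⟩
      exact ⟨h1, (ih (s-1) (by omega) x (z-1) (by omega)).mp h2⟩
    · rintro ⟨h1, h2⟩
      exact ⟨h1, (ih (s-1) (by omega) x (z-1) (by omega)).mpr h2⟩
  rcases lt_or_ge s (2^m - 2) with hc1 | hge1
  · -- Case 1 : s < n-2
    have hTs : ¬ Tpred (2^m) x z :=
      Tpred_false_of _ _ _ (by rw [hs, Nat.mod_eq_of_lt (by omega)]; omega)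
        (by omega) (by omega)
    have hTs1 : ∀ x' z' : ℕ, x' + z' = s - 1 → s ≠ 0 → ¬ Tpred (2^m) x' z' := by
      intro x' z' h' hs0
      exact Tpred_false_of _ _ _ (by rw [h', Nat.mod_eq_of_lt (by omega)]; omega)
        (by omega) (by omega)
    rw [if_neg (fun hc => hTs1 (x-1) z (by have := (hA.mp hc).1; omega)
          (by have := (hA.mp hc).1; omega) (hA.mp hc).2),
        if_neg (fun hc => hTs1 x (z-1) (by have := (hB.mp hc).1; omega)
          (by have := (hB.mp hc).1; omega) (hB.mp hc).2),
        mid_eq_cnt m x z hm (by omega)]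
    rcases Nat.eq_zero_or_pos s with rfl | hspos
    · have hcnt : cnt m x z = 2^m - 1 :=
        cnt_G4 m x z (by rw [show x = 0 by omega]; exact Nat.zero_mod _)
          (by rw [show z = 0 by omega]; exact Nat.zero_mod _)
      constructor
      · intro h; exfalso; omega
      · intro hT; exact absurd hT hTs
    · have hcnt : cnt m x z % 2 = 0 :=
        cnt_G2 m x z (by rw [hs, Nat.mod_eq_of_lt (by omega)]; omega)
          (by rw [hs, Nat.mod_eq_of_lt (by omega)]; omega)
      constructor
      · intro h; exfalso; omega
      · intro hT; exact absurd hT hTs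
  rcases eq_or_lt_of_le hge1 with hc2 | hgt1
  · -- Case 2 : s = n-2
    have hc2' : s = 2^m - 2 := hc2.symm
    have hs' : x + z = 2^m - 2 := by omega
    have hTs1 : ∀ x' z' : ℕ, x' + z' = s - 1 → ¬ Tpred (2^m) x' z' := by
      intro x' z' h'
      exact Tpred_false_of _ _ _ (by rw [h', Nat.mod_eq_of_lt (by omega)]; omega)
        (by omega) (by omega)
    rw [if_neg (fun hc => hTs1 (x-1) z (by have := (hA.mp hc).1; omega) (hA.mp hc).2),
        if_neg (fun hc => hTs1 x (z-1) (by have := (hB.mp hc).1; omega) (hB.mp hc).2)]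
    rcases Nat.mod_two_eq_zero_or_one x with hx2 | hx2
    · have hz2 : z % 2 = 0 := by omega
      have h0 : x &&& z = 0 := land_even_even_y m x z hm hs' hx2 hz2
      have hmid := mid_eq_cnt_sub m x z hm hs' h0
      have hcnt := cnt_even_even_y m x z hm hs' hx2 hz2
      constructor
      · intro _; exact Or.inr (Or.inl ⟨hs', hx2, hz2⟩)
      · intro _; omega
    · have hz2 : z % 2 = 1 := by omega
      have h0 : x &&& z ≠ 0 := land_odd_odd x z hx2 hz2
      have hmid := mid_eq_cnt_land m x z hm h0
      have hcnt := cnt_odd_odd_y m x z hm hs' hx2 hz2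
      constructor
      · intro h; exfalso; omega
      · rintro (⟨ha, -⟩ | ⟨-, hb, -⟩ | ⟨ha, -⟩)
        · rw [hs', Nat.mod_eq_of_lt (by omega)] at ha; omega
        · omega
        · omega
  rcases eq_or_lt_of_le (Nat.succ_le_of_lt hgt1) with hc3 | hgt2
  · -- Case 3 : s = n-1
    have hs' : x + z = 2^m - 1 := by omega
    have hcnt : cnt m x z = 1 :=
      cnt_G1 m x z (by omega) (by rw [hs', Nat.mod_eq_of_lt (by omega)])
    have hmid := mid_eq_cnt m x z hm (by omega)
    have hTfalse : ¬ Tpred (2^m) x z := by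
      rintro (⟨-, hb⟩ | ⟨ha, -⟩ | ⟨ha, -⟩)
      · exact hb (by omega)
      · omega
      · omega
    rcases Nat.mod_two_eq_zero_or_one x with hx2 | hx2
    · have hz2 : z % 2 = 1 := by omega
      have hAn : ¬(1 ≤ x ∧ Tpred (2^m) (x-1) z) := by
        rintro ⟨h1, (⟨ha, -⟩ | ⟨-, hb, -⟩ | ⟨ha, -⟩)⟩
        · rw [show (x-1)+z = 2^m - 2 by omega, Nat.mod_eq_of_lt (by omega)] at ha; omega
        · omega
        · omega
      have hBy : 1 ≤ z ∧ Tpred (2^m) x (z-1) :=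
        ⟨by omega, Or.inr (Or.inl ⟨by omega, hx2, by omega⟩)⟩
      rw [if_neg (fun hc => hAn (hA.mp hc)), if_pos (hB.mpr hBy), hmid]
      constructor
      · intro h; exfalso; omega
      · intro hT; exact absurd hT hTfalse
    · have hz2 : z % 2 = 0 := by omega
      have hBn : ¬(1 ≤ z ∧ Tpred (2^m) x (z-1)) := by
        rintro ⟨h1, (⟨ha, -⟩ | ⟨-, -, hb⟩ | ⟨ha, -⟩)⟩
        · rw [show x+(z-1) = 2^m - 2 by omega, Nat.mod_eq_of_lt (by omega)] at ha; omega
        · omega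
        · omega
      have hAy : 1 ≤ x ∧ Tpred (2^m) (x-1) z :=
        ⟨by omega, Or.inr (Or.inl ⟨by omega, by omega, hz2⟩)⟩
      rw [if_pos (hA.mpr hAy), if_neg (fun hc => hBn (hB.mp hc)), hmid]
      constructor
      · intro h; exfalso; omega
      · intro hT; exact absurd hT hTfalse
  rcases eq_or_lt_of_le (Nat.succ_le_of_lt hgt2) with hc4 | hgt3
  · -- Case 4 : s = n
    have hs' : x + z = 2^m := by omega
    have hmid := mid_eq_cnt m x z hm (by omega)
    have hTs1 : ∀ x' z' : ℕ, x' + z' = s - 1 → ¬ Tpred (2^m) x' z' := by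
      intro x' z' h'
      rintro (⟨-, hb⟩ | ⟨ha, -⟩ | ⟨ha, -⟩)
      · exact hb (by omega)
      · omega
      · omega
    rw [if_neg (fun hc => hTs1 (x-1) z (by have := (hA.mp hc).1; omega) (hA.mp hc).2),
        if_neg (fun hc => hTs1 x (z-1) (by have := (hB.mp hc).1; omega) (hB.mp hc).2),
        hmid]
    rcases Nat.eq_zero_or_pos x with rfl | hxpos
    · have hcnt : cnt m 0 z = 2^m - 1 :=
        cnt_G4 m 0 z (Nat.zero_mod _) (by rw [show z = 2^m by omega]; exact Nat.mod_self _)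
      constructor
      · intro h; exfalso; omega
      · rintro (⟨ha, -⟩ | ⟨ha, -⟩ | ⟨-, hb, -⟩)
        · rw [hs', Nat.mod_self] at ha; omega
        · omega
        · omega
    rcases Nat.eq_zero_or_pos z with rfl | hzpos
    · have hcnt : cnt m x 0 = 2^m - 1 :=
        cnt_G4 m x 0 (by rw [show x = 2^m by omega]; exact Nat.mod_self _) (Nat.zero_mod _)
      constructor
      · intro h; exfalso; omega
      · rintro (⟨ha, -⟩ | ⟨ha, -⟩ | ⟨-, -, hb⟩)
        · rw [hs', Nat.mod_self] at ha; omega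
        · omega
        · omega
    · have hcnt : cnt m x z = 1 := cnt_G3 m x z hs' hxpos hzpos
      constructor
      · intro _; exact Or.inr (Or.inr ⟨hs', hxpos, hzpos⟩)
      · intro _; omega
  rcases eq_or_lt_of_le (Nat.succ_le_of_lt hgt3) with hc5 | hgt4
  · -- Case 5 : s = n+1
    have hs' : x + z = 2^m + 1 := by omega
    have hmid := mid_eq_cnt m x z hm (by omega)
    have hsm : (x+z) % 2^m = 1 := by
      rw [show x+z = 2^m * 1 + 1 by omega, rep_mod _ _ _ (by omega)]
    have hTfalse : ¬ Tpred (2^m) x z := by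
      rintro (⟨ha, -⟩ | ⟨ha, -⟩ | ⟨ha, -⟩)
      · omega
      · omega
      · omega
    have hAiff : (1 ≤ x ∧ Tpred (2^m) (x-1) z) ↔ (2 ≤ x ∧ 1 ≤ z) := by
      constructor
      · rintro ⟨h1, (⟨ha, -⟩ | ⟨ha, -⟩ | ⟨-, hb, hc⟩)⟩
        · rw [show (x-1)+z = 2^m by omega, Nat.mod_self] at ha; omega
        · omega
        · exact ⟨by omega, hc⟩
      · rintro ⟨h1, h2⟩
        exact ⟨by omega, Or.inr (Or.inr ⟨by omega, by omega, h2⟩)⟩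
    have hBiff : (1 ≤ z ∧ Tpred (2^m) x (z-1)) ↔ (1 ≤ x ∧ 2 ≤ z) := by
      constructor
      · rintro ⟨h1, (⟨ha, -⟩ | ⟨ha, -⟩ | ⟨-, hb, hc⟩)⟩
        · rw [show x+(z-1) = 2^m by omega, Nat.mod_self] at ha; omega
        · omega
        · exact ⟨hb, by omega⟩
      · rintro ⟨h1, h2⟩
        exact ⟨by omega, Or.inr (Or.inr ⟨by omega, h1, by omega⟩)⟩
    by_cases hx1 : x ≤ 1
    · -- x = 0 or x = 1
      rw [if_neg (fun hc => by have := (hAiff.mp (hA.mp hc)).1; omega)]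
      rcases Nat.eq_zero_or_pos x with rfl | hxpos
      · rw [if_neg (fun hc => by have := (hBiff.mp (hB.mp hc)).1; omega), hmid]
        have hcnt : cnt m 0 z % 2 = 0 := cnt_G2 m 0 z (by omega) (by omega)
        constructor
        · intro h; exfalso; omega
        · intro hT; exact absurd hT hTfalse
      · -- x = 1, z = 2^m
        have hxe : x = 1 := by omega
        rw [if_pos (hB.mpr (hBiff.mpr ⟨by omega, by omega⟩)), hmid]
        have hcnt : 1 ≤ cnt m x z :=
          cnt_pos_of_z m x z hm (by rw [show z = 2^m by omega]; exact Nat.mod_self _)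
        constructor
        · intro h; exfalso; omega
        · intro hT; exact absurd hT hTfalse
    · by_cases hz1 : z ≤ 1
      · rcases Nat.eq_zero_or_pos z with rfl | hzpos
        · rw [if_neg (fun hc => by have := (hAiff.mp (hA.mp hc)).2; omega),
              if_neg (show ¬(1 ≤ 0 ∧ IsUlam (wordThree x (2^m-2) (0-1))) from
                fun hc => by have := hc.1; omega), hmid]
          have hcnt : cnt m x 0 % 2 = 0 := cnt_G2 m x 0 (by omega) (by omega)
          constructor
          · intro h; exfalso; omega
          · intro hT; exact absurd hT hTfalse
        · -- z = 1, x = 2^m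
          rw [if_pos (hA.mpr (hAiff.mpr ⟨by omega, by omega⟩)),
              if_neg (show ¬(1 ≤ z ∧ IsUlam (wordThree x (2^m-2) (z-1))) from
                fun hc => by have := (hBiff.mp (hB.mp hc)).2; omega), hmid]
          have hcnt : 1 ≤ cnt m x z :=
            cnt_pos_of_x m x z hm (by rw [show x = 2^m by omega]; exact Nat.mod_self _)
          constructor
          · intro h; exfalso; omega
          · intro hT; exact absurd hT hTfalse
      · -- both ≥ 2
        rw [if_pos (hA.mpr (hAiff.mpr ⟨by omega, by omega⟩)),
            if_pos (hB.mpr (hBiff.mpr ⟨by omega, by omega⟩))]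
        constructor
        · intro h; exfalso; omega
        · intro hT; exact absurd hT hTfalse
  · -- Case 6 : s ≥ n+2
    have hs6 : 2^m + 2 ≤ s := by omega
    have hq := (Nat.div_add_mod s (2^m)).symm
    have hrlt : s % 2^m < 2^m := Nat.mod_lt _ (by omega)
    have hq1 : 1 ≤ s / 2^m := by
      rcases Nat.eq_zero_or_pos (s / 2^m) with h0 | h
      · rw [h0, Nat.mul_zero] at hq; omega
      · exact h
    have hnq : 2^m * 1 ≤ 2^m * (s / 2^m) := Nat.mul_le_mul_left _ hq1
    rw [Nat.mul_one] at hnq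
    by_cases hr1 : s % 2^m = 2^m - 1
    · -- r = n-1 : Ulam everywhere
      have hcnt : cnt m x z = 1 := cnt_G1 m x z (by omega) (by rw [hs]; exact hr1)
      have hmid := mid_eq_cnt m x z hm (by omega)
      have e : s - 1 = 2^m * (s / 2^m) + (2^m - 2) := by omega
      have hTs1 : ∀ x' z' : ℕ, x' + z' = s - 1 → ¬ Tpred (2^m) x' z' := by
        intro x' z' h'
        exact Tpred_false_of _ _ _ (by rw [h', e, rep_mod _ _ _ (by omega)]; omega)
          (by omega) (by omega)
      rw [if_neg (fun hc => hTs1 (x-1) z (by have := (hA.mp hc).1; omega) (hA.mp hc).2),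
          if_neg (fun hc => hTs1 x (z-1) (by have := (hB.mp hc).1; omega) (hB.mp hc).2),
          hmid]
      constructor
      · intro _
        exact Or.inl ⟨by rw [hs]; exact hr1, by omega⟩
      · intro _; omega
    by_cases hr0 : s % 2^m = 0
    · -- r = 0, s ≥ 2n
      have hq2 : 2 ≤ s / 2^m := by
        by_contra hcon
        have he1 : s / 2^m = 1 := by omega
        rw [he1, Nat.mul_one] at hq
        omega
      have hnq2 : 2^m * 2 ≤ 2^m * (s / 2^m) := Nat.mul_le_mul_left _ hq2
      have e : s - 1 = 2^m * (s / 2^m - 1) + (2^m - 1) := by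
        have e2 : 2^m * (s / 2^m - 1) + 2^m = 2^m * (s / 2^m) := by
          rw [← Nat.mul_succ]
          congr 1
          omega
        omega
      have hTs1 : ∀ x' z' : ℕ, x' + z' = s - 1 → Tpred (2^m) x' z' := by
        intro x' z' h'
        exact Or.inl ⟨by rw [h', e, rep_mod _ _ _ (by omega)], by omega⟩
      have hTfalse : ¬ Tpred (2^m) x z := by
        rintro (⟨ha, -⟩ | ⟨ha, -⟩ | ⟨ha, -⟩)
        · rw [hs] at ha; omega
        · omega
        · omega
      have hmid := mid_eq_cnt m x z hm (by omega)
      rcases Nat.eq_zero_or_pos x with rfl | hxpos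
      · rw [if_neg (fun hc => by have := (hA.mp hc).1; omega),
            if_pos (hB.mpr ⟨by omega, hTs1 0 (z-1) (by omega)⟩), hmid]
        have hcnt : 1 ≤ cnt m 0 z :=
          cnt_pos_of_z m 0 z hm (by rw [show z = s by omega]; exact hr0)
        constructor
        · intro h; exfalso; omega
        · intro hT; exact absurd hT hTfalse
      rcases Nat.eq_zero_or_pos z with rfl | hzpos
      · rw [if_pos (hA.mpr ⟨by omega, hTs1 (x-1) 0 (by omega)⟩),
            if_neg (fun hc => by have := (hB.mp hc).1; omega), hmid]
        have hcnt : 1 ≤ cnt m x 0 :=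
          cnt_pos_of_x m x 0 hm (by rw [show x = s by omega]; exact hr0)
        constructor
        · intro h; exfalso; omega
        · intro hT; exact absurd hT hTfalse
      · rw [if_pos (hA.mpr ⟨by omega, hTs1 (x-1) z (by omega)⟩),
            if_pos (hB.mpr ⟨by omega, hTs1 x (z-1) (by omega)⟩)]
        constructor
        · intro h; exfalso; omega
        · intro hT; exact absurd hT hTfalse
    · -- 1 ≤ r ≤ n-2
      have e : s - 1 = 2^m * (s / 2^m) + (s % 2^m - 1) := by omega
      have hTs1 : ∀ x' z' : ℕ, x' + z' = s - 1 → ¬ Tpred (2^m) x' z' := by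
        intro x' z' h'
        exact Tpred_false_of _ _ _ (by rw [h', e, rep_mod _ _ _ (by omega)]; omega)
          (by omega) (by omega)
      have hTfalse : ¬ Tpred (2^m) x z := by
        rintro (⟨ha, -⟩ | ⟨ha, -⟩ | ⟨ha, -⟩)
        · rw [hs] at ha; omega
        · omega
        · omega
      have hcnt : cnt m x z % 2 = 0 :=
        cnt_G2 m x z (by rw [hs]; exact hr0) (by rw [hs]; exact hr1)
      have hmid := mid_eq_cnt m x z hm (by omega)
      rw [if_neg (fun hc => hTs1 (x-1) z (by have := (hA.mp hc).1; omega) (hA.mp hc).2),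
          if_neg (fun hc => hTs1 x (z-1) (by have := (hB.mp hc).1; omega) (hB.mp hc).2),
          hmid]
      constructor
      · intro h; exfalso; omega
      · intro hT; exact absurd hT hTfalse

end UlamProof

/-- description of `Ulam[2^(k+1)-2]` for `k ≥ 1`. -/
theorem ulamSet_pow_sub_two (k : ℕ) (hk : 1 ≤ k) :
    UlamSet (2 ^ (k + 1) - 2) =
      {p : ℕ × ℕ |
        ((p.1 + p.2) % 2 ^ (k + 1) = 2 ^ (k + 1) - 1 ∧ p.1 + p.2 ≠ 2 ^ (k + 1) - 1) ∨
        (p.1 + p.2 = 2 ^ (k + 1) - 2 ∧ Even p.1 ∧ Even p.2) ∨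
        (p.1 + p.2 = 2 ^ (k + 1) ∧ 0 < p.1 ∧ 0 < p.2)} := by
  ext ⟨x, z⟩
  simp only [UlamSet, Set.mem_setOf_eq]
  rw [ulam_three_char (k+1) (by omega) (x+z) x z rfl]
  unfold Tpred
  simp only [Nat.even_iff]
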